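/- Let R be a commutative ℚ-algebra and f₁, …, f_p ∈ R. Let K_•(f₁, …, f_p) be the Koszul complex, with K_i = Λ^i(R^p) and differentials A_i : Λ^i(R^p) → Λ^{i−1}(R^p) given by contraction with the linear functional e_j ↦ f_j, and let dA_i denote the matrix of A_i (in the standard bases) with the universal derivation d : R → Ω¹_{R/ℚ} applied entrywise. Then the composite dA₁ ∘ dA₂ ∘ ⋯ ∘ dA_p : K_p → K₀ ⊗ Ω^p_{R/ℚ}, under the identifications K_p ≅ R and K₀ ≅ R, is multiplication by p! · df₁ ∧ df₂ ∧ ⋯ ∧ df_p ∈ Ω^p_{R/ℚ}. In particular, the degree-p local fundamental class (1/p!) dA₁ ∘ ⋯ ∘ dA_p of the Koszul complex equals df₁ ∧ ⋯ ∧ df_p. -/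

import Mathlib

/-!
Write `ω_s` for the product of the `df_j`, `j ∈ s`, taken in increasing order. Pairing the
column `s` of `dA_{i+1}` with the family `(ω_t)` gives `(i + 1) ω_s`: the term of each `j ∈ s`
picks up the sign `(-1)^k`, `k = #{x ∈ s | x < j}`, once from the Koszul differential and once
more from moving `df_j` past the `k` smaller factors of `ω_s`, so the two signs cancel. By
induction on `i`, the entry of `dA₁ ⋯ dA_i` at `(s, ∅)` is `i! ω_s`, and
`ω_univ = df₁ ∧ ⋯ ∧ df_p`.
-/

noncomputable section

/-- The standard basis of the `i`-th exterior power `Λ^i(R^p)`, indexed by the `i`-element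
subsets of `Fin p` (an `i`-element subset `{j₁ < ⋯ < jᵢ}` corresponds to
`e_{j₁} ∧ ⋯ ∧ e_{jᵢ}`). -/
abbrev KoszulIdx (p i : ℕ) := { s : Finset (Fin p) // s.card = i }

variable {R : Type*} [CommRing R]

/-- The entry of the Koszul differential `A_{i+1} : Λ^{i+1}(R^p) → Λ^i(R^p)` (contraction with
the functional `e_j ↦ f j`) in the standard bases, at row `t` (an `i`-element subset) and
column `s` (an `(i+1)`-element subset):  it is `(-1)^{k+1} f_{j_k}` if `s = t ∪ {j_k}` with
`j_k` the `k`-th smallest element of `s`, and `0` otherwise. -/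
def koszulEntry (p : ℕ) (f : Fin p → R) (i : ℕ) (t : KoszulIdx p i) (s : KoszulIdx p (i + 1)) :
    R :=
  ∑ j ∈ s.1 \ t.1,
    if insert j t.1 = s.1 then (-1 : R) ^ (s.1.filter (fun x => x < j)).card * f j else 0

variable (R) in
/-- The exterior algebra of the module of Kähler differentials `Ω¹_{R/ℚ}` over `R`. -/
abbrev LambdaOmega [Algebra ℚ R] := ExteriorAlgebra R (KaehlerDifferential ℚ R)

/-- The matrix `dA_{i+1}` of the Koszul differential with the universal derivation
`d : R → Ω¹_{R/ℚ}` applied entrywise, viewed in the exterior algebra of `Ω¹_{R/ℚ}`. -/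
def dKoszul [Algebra ℚ R] (p : ℕ) (f : Fin p → R) (i : ℕ) :
    Matrix (KoszulIdx p i) (KoszulIdx p (i + 1)) (LambdaOmega R) :=
  fun t s => ExteriorAlgebra.ι R ((KaehlerDifferential.D ℚ R) (koszulEntry p f i t s))

/-- The composite `dA₁ ∘ dA₂ ∘ ⋯ ∘ dA_i : K_i → K₀ ⊗ Ω^i_{R/ℚ}` as a matrix with entries in
the exterior algebra of `Ω¹_{R/ℚ}` (entries of the factors are multiplied in the order
`dA_i, dA_{i-1}, …, dA₁` along each path of basis elements). -/
def dKoszulComp [Algebra ℚ R] (p : ℕ) (f : Fin p → R) :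
    (i : ℕ) → Matrix (KoszulIdx p i) (KoszulIdx p 0) (LambdaOmega R)
  | 0 => (1 : Matrix (KoszulIdx p 0) (KoszulIdx p 0) (LambdaOmega R))
  | i + 1 => (dKoszul p f i).transpose * dKoszulComp p f i

open Finset ExteriorAlgebra

section WedgeProd

variable {M : Type*} [AddCommGroup M] [Module R M] {I : Type*} [LinearOrder I]

variable (R) in
def wedgeProd (v : I → M) (s : Finset I) : ExteriorAlgebra R M :=
  (s.sort.map fun j => ι R (v j)).prod

@[simp]
lemma wedgeProd_empty (v : I → M) : wedgeProd R v ∅ = 1 := by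
  simp [wedgeProd]

lemma wedgeProd_insert_of_forall_lt (v : I → M) {a : I} {s : Finset I} (ha : ∀ x ∈ s, a < x) :
    wedgeProd R v (insert a s) = ι R (v a) * wedgeProd R v s := by
  rw [wedgeProd, sort_insert _ (fun x hx => (ha x hx).le) (fun h => (ha a h).false)]
  rfl

lemma wedgeProd_univ {n : ℕ} (v : Fin n → M) : wedgeProd R v univ = ιMulti R n v := by
  rw [wedgeProd, Fin.sort_univ, ιMulti_apply, List.ofFn_eq_map]

lemma ι_mul_wedgeProd_erase (v : I → M) {s : Finset I} {j : I} (hj : j ∈ s) :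
    ι R (v j) * wedgeProd R v (s.erase j) =
      (-1 : ℤ) ^ #{x ∈ s | x < j} • wedgeProd R v s := by
  induction s using Finset.induction_on_min generalizing j with
  | empty => simp at hj
  | insert a s ha ih =>
    have has : a ∉ s := fun h => (ha a h).false
    rcases mem_insert.mp hj with rfl | hjs
    · have hnone : #{x ∈ insert j s | x < j} = 0 := by
        simp only [card_eq_zero, filter_eq_empty_iff, mem_insert, not_lt]
        rintro x (rfl | hx)
        exacts [le_rfl, (ha x hx).le]
      rw [erase_insert has, hnone, pow_zero, one_smul, wedgeProd_insert_of_forall_lt v ha]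
    · have haj : a < j := ha j hjs
      have hcount : #{x ∈ insert a s | x < j} = #{x ∈ s | x < j} + 1 := by
        rw [filter_insert, if_pos haj, card_insert_of_notMem (fun h => has (mem_filter.mp h).1)]
      have hanti : ι R (v j) * ι R (v a) = -(ι R (v a) * ι R (v j)) :=
        eq_neg_of_add_eq_zero_left (ι_add_mul_swap _ _)
      rw [erase_insert_of_ne haj.ne,
        wedgeProd_insert_of_forall_lt v (fun x hx => ha x (mem_of_mem_erase hx)),
        wedgeProd_insert_of_forall_lt v ha, ← mul_assoc, hanti, neg_mul, mul_assoc, ih hjs,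
        hcount, pow_succ, mul_neg_one, neg_smul, mul_smul_comm]

end WedgeProd

lemma KoszulIdx.sum_ite_val_eq {M : Type*} [AddCommMonoid M] {p i : ℕ} {u : Finset (Fin p)}
    (hu : #u = i) (g : Finset (Fin p) → M) :
    ∑ t : KoszulIdx p i, (if t.1 = u then g t.1 else 0) = g u := by
  rw [Fintype.sum_eq_single ⟨u, hu⟩ fun t ht => if_neg fun h => ht (Subtype.ext h), if_pos rfl]

lemma koszulEntry_eq_sum_erase (p : ℕ) (f : Fin p → R) (i : ℕ) (t : KoszulIdx p i)
    (s : KoszulIdx p (i + 1)) :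
    koszulEntry p f i t s =
      ∑ j ∈ s.1, if t.1 = s.1.erase j then (-1 : R) ^ #{x ∈ s.1 | x < j} * f j else 0 := by
  rw [koszulEntry]
  calc _ = ∑ j ∈ s.1 \ t.1,
        if t.1 = s.1.erase j then (-1 : R) ^ #{x ∈ s.1 | x < j} * f j else 0 := by
        refine sum_congr rfl fun j hj => if_congr ?_ rfl rfl
        obtain ⟨hjs, hjt⟩ := mem_sdiff.mp hj
        rw [eq_comm, ← erase_eq_iff_eq_insert hjs hjt, eq_comm]
    _ = _ := by
        refine sum_subset sdiff_subset fun j hjs hj => if_neg fun h => ?_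
        have hjt : j ∈ t.1 := by simpa [hjs] using hj
        exact notMem_erase j s.1 (h ▸ hjt)

section Koszul

variable [Algebra ℚ R]

lemma sum_dKoszul_mul_wedgeProd (p : ℕ) (f : Fin p → R) (i : ℕ) (s : KoszulIdx p (i + 1)) :
    ∑ t, dKoszul p f i t s * wedgeProd R (fun j => KaehlerDifferential.D ℚ R (f j)) t.1 =
      (i + 1) • wedgeProd R (fun j => KaehlerDifferential.D ℚ R (f j)) s.1 := by
  set df : Fin p → KaehlerDifferential ℚ R := fun j => KaehlerDifferential.D ℚ R (f j)
  have hsign (k : ℕ) (j : Fin p) :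
      ι R (KaehlerDifferential.D ℚ R ((-1 : R) ^ k * f j)) = (-1 : ℤ) ^ k • ι R (df j) := by
    rw [← map_zsmul, ← map_zsmul, zsmul_eq_mul]
    push_cast
    rfl
  simp_rw [dKoszul, koszulEntry_eq_sum_erase, map_sum, apply_ite, map_zero, sum_mul, ite_mul,
    zero_mul, hsign]
  rw [sum_comm]
  calc _ = ∑ j ∈ s.1, ((-1 : ℤ) ^ #{x ∈ s.1 | x < j} • ι R (df j)) *
        wedgeProd R df (s.1.erase j) := by
        refine sum_congr rfl fun j hj =>
          KoszulIdx.sum_ite_val_eq ?_ (fun u => _ * wedgeProd R df u)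
        rw [card_erase_of_mem hj, s.2, Nat.add_sub_cancel]
    _ = ∑ j ∈ s.1, wedgeProd R df s.1 := by
        refine sum_congr rfl fun j hj => ?_
        rw [smul_mul_assoc, ι_mul_wedgeProd_erase df hj, smul_smul, ← mul_pow,
          neg_one_mul, neg_neg, one_pow, one_smul]
    _ = _ := by rw [sum_const, s.2]

lemma dKoszulComp_apply_empty (p : ℕ) (f : Fin p → R) (i : ℕ) (s : KoszulIdx p i) :
    dKoszulComp p f i s ⟨∅, rfl⟩ =
      i.factorial • wedgeProd R (fun j => KaehlerDifferential.D ℚ R (f j)) s.1 := by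
  induction i with
  | zero =>
    obtain rfl : s = ⟨∅, rfl⟩ := Subtype.ext (card_eq_zero.mp s.2)
    simp [dKoszulComp]
  | succ i ih =>
    simp_rw [dKoszulComp, Matrix.mul_apply, Matrix.transpose_apply, ih, mul_smul_comm,
      ← smul_sum, sum_dKoszul_mul_wedgeProd, smul_smul, Nat.factorial_succ, mul_comm]

end Koszul

/-- Let `R` be a commutative `ℚ`-algebra and `f₁, …, f_p ∈ R`.  The composite
`dA₁ ∘ dA₂ ∘ ⋯ ∘ dA_p : K_p → K₀ ⊗ Ω^p_{R/ℚ}` of the entrywise differentials of the Koszul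
differentials, under the identifications `K_p ≅ R` (basis `e₁ ∧ ⋯ ∧ e_p`, i.e. the full subset
`univ`) and `K₀ ≅ R` (basis `1`, i.e. the empty subset), is multiplication by
`p! · df₁ ∧ df₂ ∧ ⋯ ∧ df_p ∈ Ω^p_{R/ℚ}`; in particular the degree-`p` local fundamental class
`(1/p!) dA₁ ∘ ⋯ ∘ dA_p` of the Koszul complex equals `df₁ ∧ ⋯ ∧ df_p`. -/
theorem stmt5 [Algebra ℚ R] (p : ℕ) (f : Fin p → R) :
    dKoszulComp p f p ⟨Finset.univ, by simp⟩ ⟨∅, by simp⟩ =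
      (p.factorial : ℕ) •
        (List.ofFn fun j =>
          ExteriorAlgebra.ι R ((KaehlerDifferential.D ℚ R) (f j))).prod := by
  rw [dKoszulComp_apply_empty, wedgeProd_univ, ιMulti_apply]

end
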